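/- For every index i with 1 ≤ i ≤ m, the prefix sums satisfy Σ_{j=1}^{i} φ_j ≤ Σ_{j=1}^{i} ψ_j. Moreover, if i < m and φ_i ≠ φ_{i+1}, then equality holds: Σ_{j=1}^{i} φ_j = Σ_{j=1}^{i} ψ_j. -/

import Mathlib

/-!
Write `F n = n * c n`. The sums of `ψ` telescope to `F`, so `Avg(a+1, k)` is the slope of the chord
of `F` from `a` to `k`, and `ψ'_{a+1}` is the least slope of a chord of `F` starting at `a`.
On a maximal block `(a, i]` on which `φ` is constant, `φ = ψ'_{a+1}`, so over the block the sums
of `φ` grow by at most `F i - F a`; by induction they agree with `F` at `a`, which gives the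
inequality. If moreover `φ` jumps after `i`, consider the last point `p ∈ [a, i]` reached from `a`
by a chord of least slope. If `p < i`, a chord of slope at most `φ` starts at `p`; it cannot end in
`(p, i]` by the choice of `p`, nor beyond `i`, since every chord starting at `i` is steeper than
`φ`. Hence `p = i`, and the sums agree with `F` at `i` as well.
-/

/-- Virtual cost of the uniform distribution over `{c 1, …, c m}`:
`ψ i = i·c i − (i−1)·c (i−1)`. -/
noncomputable def vc (c : ℕ → ℝ) (i : ℕ) : ℝ :=
  (i : ℝ) * c i - ((i : ℝ) - 1) * c (i - 1)

/-- `Avg(i,k) = (1/(k−i+1))·Σ_{j=i}^{k} ψ_j`. -/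
noncomputable def avg (c : ℕ → ℝ) (i k : ℕ) : ℝ :=
  (∑ j ∈ Finset.Icc i k, vc c j) / ((k : ℝ) - (i : ℝ) + 1)

/-- `ψ'_i = min_{i ≤ k ≤ m} Avg(i,k)`. -/
noncomputable def rvcAux (m : ℕ) (c : ℕ → ℝ) (i : ℕ) : ℝ :=
  sInf {x | ∃ k, i ≤ k ∧ k ≤ m ∧ x = avg c i k}

/-- Regularized virtual cost: `φ_i = max_{1 ≤ j ≤ i} ψ'_j`. -/
noncomputable def rvc (m : ℕ) (c : ℕ → ℝ) (i : ℕ) : ℝ :=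
  sSup {x | ∃ j, 1 ≤ j ∧ j ≤ i ∧ x = rvcAux m c j}

open Finset

lemma Set.finite_setOf_exists_mem_Icc {α : Type*} (f : ℕ → α) (a b : ℕ) :
    {x | ∃ k, a ≤ k ∧ k ≤ b ∧ x = f k}.Finite :=
  ((Set.finite_Icc a b).image f).subset <| by
    rintro x ⟨k, hak, hkb, rfl⟩
    exact ⟨k, ⟨hak, hkb⟩, rfl⟩

lemma sum_Icc_one_eq_add_mul (f : ℕ → ℝ) (v : ℝ) {a i : ℕ} (hai : a ≤ i)
    (hf : ∀ l, a < l → l ≤ i → f l = v) :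
    ∑ j ∈ Icc 1 i, f j = ∑ j ∈ Icc 1 a, f j + (i - a) * v := by
  induction i, hai using Nat.le_induction with
  | base => simp
  | succ i hai ih =>
    rw [sum_Icc_succ_top (by omega), ih fun l hal hli => hf l hal (by omega),
      hf (i + 1) (by omega) le_rfl]
    push_cast
    ring

lemma sum_Icc_succ_vc (c : ℕ → ℝ) {a k : ℕ} (hak : a ≤ k) :
    ∑ j ∈ Icc (a + 1) k, vc c j = k * c k - a * c a := by
  induction k, hak using Nat.le_induction with
  | base => simp
  | succ k hak ih =>
    rw [sum_Icc_succ_top (by omega), ih, vc, Nat.add_sub_cancel]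
    push_cast
    ring

lemma avg_succ (c : ℕ → ℝ) {a k : ℕ} (hak : a < k) :
    avg c (a + 1) k = (k * c k - a * c a) / (k - a) := by
  rw [avg, sum_Icc_succ_vc c hak.le]
  push_cast
  ring_nf

section

variable {m : ℕ} {c : ℕ → ℝ}

lemma rvcAux_succ_mul_le {a k : ℕ} (hak : a < k) (hkm : k ≤ m) :
    rvcAux m c (a + 1) * (k - a) ≤ k * c k - a * c a := by
  have h : rvcAux m c (a + 1) ≤ avg c (a + 1) k :=
    csInf_le (Set.finite_setOf_exists_mem_Icc _ _ _).bddBelow ⟨k, hak, hkm, rfl⟩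
  rwa [avg_succ c hak, le_div_iff₀ (sub_pos.2 (Nat.cast_lt.2 hak))] at h

lemma exists_le_rvcAux_succ_mul {a : ℕ} (ham : a < m) :
    ∃ k, a < k ∧ k ≤ m ∧ k * c k - a * c a ≤ rvcAux m c (a + 1) * (k - a) := by
  obtain ⟨k, hak, hkm, hk⟩ :
      ∃ k, a + 1 ≤ k ∧ k ≤ m ∧ rvcAux m c (a + 1) = avg c (a + 1) k :=
    Set.Nonempty.csInf_mem (by exact ⟨_, a + 1, le_rfl, ham, rfl⟩)
      (Set.finite_setOf_exists_mem_Icc _ _ _)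
  refine ⟨k, hak, hkm, le_of_eq ?_⟩
  rw [hk, avg_succ c hak, div_mul_cancel₀ _ (sub_pos.2 (Nat.cast_lt.2 hak)).ne']

lemma rvcAux_le_rvc {i j : ℕ} (hj : 1 ≤ j) (hji : j ≤ i) : rvcAux m c j ≤ rvc m c i :=
  le_csSup (Set.finite_setOf_exists_mem_Icc _ _ _).bddAbove ⟨j, hj, hji, rfl⟩

lemma exists_rvc_eq_rvcAux {i : ℕ} (hi : 1 ≤ i) :
    ∃ j, 1 ≤ j ∧ j ≤ i ∧ rvc m c i = rvcAux m c j :=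
  Set.Nonempty.csSup_mem (by exact ⟨_, 1, le_rfl, hi, rfl⟩)
    (Set.finite_setOf_exists_mem_Icc _ _ _)

lemma rvc_mono {a b : ℕ} (ha : 1 ≤ a) (hab : a ≤ b) : rvc m c a ≤ rvc m c b := by
  obtain ⟨j, hj, hja, hj_eq⟩ := exists_rvc_eq_rvcAux (m := m) (c := c) ha
  exact hj_eq ▸ rvcAux_le_rvc hj (hja.trans hab)

lemma rvc_succ_eq_rvcAux {a : ℕ} (hbreak : a = 0 ∨ rvc m c a < rvc m c (a + 1)) :
    rvc m c (a + 1) = rvcAux m c (a + 1) := by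
  obtain ⟨j, hj, hja, hj_eq⟩ := exists_rvc_eq_rvcAux (m := m) (c := c) (Nat.succ_pos a)
  rcases hja.lt_or_eq with hja | rfl
  · have := rvcAux_le_rvc (m := m) (c := c) hj (Nat.le_of_lt_succ hja)
    rcases hbreak with rfl | hlt
    · omega
    · linarith
  · exact hj_eq

lemma exists_block_start {i : ℕ} (hi : 1 ≤ i) :
    ∃ a < i, (a = 0 ∨ rvc m c a < rvc m c (a + 1)) ∧
      ∀ l, a < l → l ≤ i → rvc m c l = rvc m c i := by
  classical
  have hP : ∃ j, 1 ≤ j ∧ rvc m c j = rvc m c i := ⟨i, hi, rfl⟩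
  obtain ⟨hj, hj_eq⟩ := Nat.find_spec hP
  have hji : Nat.find hP ≤ i := Nat.find_min' hP ⟨hi, rfl⟩
  refine ⟨Nat.find hP - 1, by omega, ?_, fun l hl hli => ?_⟩
  · rcases hj.lt_or_eq with hj | hj
    · refine Or.inr (lt_of_le_of_ne (rvc_mono (by omega) (by omega)) fun h => ?_)
      rw [Nat.sub_add_cancel hj.le, hj_eq] at h
      exact Nat.find_min hP (by omega) ⟨by omega, h⟩
    · exact Or.inl (by omega)
  · exact le_antisymm (rvc_mono (by omega) hli) (hj_eq ▸ rvc_mono hj (by omega))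

lemma le_rvcAux_succ_mul_of_lt {a i : ℕ} (hai : a < i) (him : i < m)
    (hle : ∀ l, a < l → l ≤ i → rvcAux m c l ≤ rvcAux m c (a + 1))
    (hlt : rvcAux m c (a + 1) < rvcAux m c (i + 1)) :
    i * c i - a * c a ≤ rvcAux m c (a + 1) * (i - a) := by
  classical
  set v := rvcAux m c (a + 1)
  let P p := a ≤ p ∧ p * c p - a * c a = v * (p - a)
  obtain ⟨hap, hp⟩ : P (Nat.findGreatest P i) :=
    Nat.findGreatest_spec hai.le ⟨le_rfl, by ring⟩
  set p := Nat.findGreatest P i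
  rcases (Nat.findGreatest_le i : p ≤ i).lt_or_eq with hpi | (hpi : p = i)
  · exfalso
    obtain ⟨k, hpk, hkm, hk⟩ := exists_le_rvcAux_succ_mul (c := c) (hpi.trans him)
    have hk_le : rvcAux m c (p + 1) * (k - p) ≤ v * (k - p) :=
      mul_le_mul_of_nonneg_right (hle (p + 1) (by omega) (by omega))
        (sub_nonneg.2 (Nat.cast_le.2 hpk.le))
    have hak := rvcAux_succ_mul_le (c := c) (hap.trans_lt hpk) hkm
    rcases le_or_gt k i with hki | hik
    · have : k ≤ p := Nat.le_findGreatest hki ⟨by omega, by linarith⟩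
      omega
    · have hik' := rvcAux_succ_mul_le (c := c) hik hkm
      have hai' := rvcAux_succ_mul_le (c := c) hai him.le
      have := mul_lt_mul_of_pos_right hlt (sub_pos.2 (Nat.cast_lt.2 hik))
      linarith
  · exact hpi ▸ hp.le

theorem sum_Icc_rvc_le_and_eq {i : ℕ} (him : i ≤ m) :
    ∑ j ∈ Icc 1 i, rvc m c j ≤ i * c i ∧
      (i < m → rvc m c i ≠ rvc m c (i + 1) → ∑ j ∈ Icc 1 i, rvc m c j = i * c i) := by
  induction i using Nat.strong_induction_on with
  | _ i ih =>
  rcases Nat.eq_zero_or_pos i with rfl | hi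
  · simp
  obtain ⟨a, hai, hbreak, hconst⟩ := exists_block_start hi
  have htight : ∑ j ∈ Icc 1 a, rvc m c j = a * c a := by
    rcases hbreak with rfl | hlt
    · simp
    · exact (ih a hai (by omega)).2 (by omega) hlt.ne
  have hv : rvc m c i = rvcAux m c (a + 1) :=
    (hconst (a + 1) (by omega) hai).symm.trans (rvc_succ_eq_rvcAux hbreak)
  have hlow := rvcAux_succ_mul_le (c := c) hai him
  rw [sum_Icc_one_eq_add_mul _ _ hai.le hconst, htight]
  refine ⟨by rw [hv]; linarith, fun him' hne => ?_⟩
  have hjump : rvc m c i < rvc m c (i + 1) := (rvc_mono hi i.le_succ).lt_of_ne hne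
  have hup := le_rvcAux_succ_mul_of_lt hai him'
    (fun l hal hli => (rvcAux_le_rvc (by omega) le_rfl).trans_eq ((hconst l hal hli).trans hv))
    (hv ▸ hjump.trans_eq (rvc_succ_eq_rvcAux (Or.inr hjump)))
  rw [hv]
  linarith

end

theorem stmt4_general (m : ℕ) (c : ℕ → ℝ)
    (i : ℕ) (him : i ≤ m) :
    (∑ j ∈ Finset.Icc 1 i, rvc m c j ≤ ∑ j ∈ Finset.Icc 1 i, vc c j) ∧
      (i < m → rvc m c i ≠ rvc m c (i + 1) →
        ∑ j ∈ Finset.Icc 1 i, rvc m c j = ∑ j ∈ Finset.Icc 1 i, vc c j) := by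
  have hvc : ∑ j ∈ Icc 1 i, vc c j = i * c i := by
    simpa using sum_Icc_succ_vc c (Nat.zero_le i)
  rw [hvc]
  exact sum_Icc_rvc_le_and_eq him

/-- prefix sums of `φ` are at most prefix sums of `ψ`, with
equality whenever `φ_i ≠ φ_{i+1}`. -/
theorem stmt4 (m : ℕ) (hm : 1 ≤ m) (c : ℕ → ℝ) (hc0 : c 0 = 0)
    (hmono : ∀ i j, i ≤ j → j ≤ m → c i ≤ c j)
    (i : ℕ) (hi : 1 ≤ i) (him : i ≤ m) :
    (∑ j ∈ Finset.Icc 1 i, rvc m c j ≤ ∑ j ∈ Finset.Icc 1 i, vc c j) ∧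
      (i < m → rvc m c i ≠ rvc m c (i + 1) →
        ∑ j ∈ Finset.Icc 1 i, rvc m c j = ∑ j ∈ Finset.Icc 1 i, vc c j) :=
  stmt4_general m c i him
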